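/- Suppose r ≥ 2 and n ≥ 1, and fix m ∈ {1, …, n} and k ∈ {1, …, r}. Then: ∑_{l=1}^r E[S_k² (ρ_m(l) − ρ_m(k))⁴] ≤ 0.1455 r⁵; ∑_{l=1}^r E[S_k⁴ (ρ_m(l) − ρ_m(k))⁴] ≤ 0.6717 r⁵; and ∑_{l=1}^r E[S_k² (ρ_m(l) − ρ_m(k))⁶] ≤ 0.09116 r⁷. -/

import Mathlib

open MeasureTheory Finset Real

noncomputable section

instance instMSPerm (r : ℕ) : MeasurableSpace (Equiv.Perm (Fin r)) := ⊤

/-- The joint law of `n` independent uniformly random permutations of `{1, …, r}`: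
the uniform probability measure on the finite product space. -/
def friedmanMeasure (n r : ℕ) : Measure (Fin n → Equiv.Perm (Fin r)) :=
  (PMF.uniformOfFintype (Fin n → Equiv.Perm (Fin r))).toMeasure

/-- `ρ_i(j) = π_i(j) - (r+1)/2`, where `π_i(j) ∈ {1, …, r}` is the rank assigned by the
`i`-th permutation to treatment `j` (a permutation of `Fin r` assigns values in `{0, …, r-1}`,
hence the `+ 1`). -/
def rho (n r : ℕ) (i : Fin n) (j : Fin r) (ω : Fin n → Equiv.Perm (Fin r)) : ℝ :=
  ((ω i j : ℕ) : ℝ) + 1 - ((r : ℝ) + 1) / 2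

/-- `S_j = (√12/√(r(r+1)n)) ∑_{i=1}^n ρ_i(j)`. -/
def Sstat (n r : ℕ) (j : Fin r) (ω : Fin n → Equiv.Perm (Fin r)) : ℝ :=
  Real.sqrt 12 / Real.sqrt ((r : ℝ) * ((r : ℝ) + 1) * (n : ℝ)) * ∑ i, rho n r i j ω

/-- Friedman's statistic `F_r = ∑_{j=1}^r S_j²`. -/
def friedman (n r : ℕ) (ω : Fin n → Equiv.Perm (Fin r)) : ℝ :=
  ∑ j, (Sstat n r j ω) ^ 2

/-- The chi-square distribution with `p` degrees of freedom: the Gamma distribution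
with shape `p/2` and rate `1/2`. -/
def chiSq (p : ℕ) : Measure ℝ := ProbabilityTheory.gammaMeasure ((p : ℝ) / 2) (1 / 2)

end

/-!
Write `S_k = c (T + ρ_m(k))` with `c² = 12 / (r(r+1)n)`, where `T = ∑_{i ≠ m} ρ_i(k)` does not
depend on `π_m`. Expanding binomially, each expectation factorises into a moment of `T` (a sum
of `n - 1` i.i.d. centred terms, so `E T = 0`, `E T² = (n-1) σ²` and
`E T⁴ = (n-1) μ₄ + 3(n-1)(n-2) σ⁴`) times `E[ρ_m(k)^j (ρ_m(l) - ρ_m(k))^q]`. Summed over `l`,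
the latter become double sums `∑_{a,b} a^j (b-a)^q` over the centred ranks, which expand into
products of centred power sums. These are explicit polynomials in `r`, because the centred ranks
of `r + 2` items are those of `r` items together with `±(r+1)/2`. After bounding the weights
depending on `n`, each estimate is a polynomial inequality in `r ≥ 2`.
-/

open scoped BigOperators

noncomputable def centeredRank (r : ℕ) (a : Fin r) : ℝ := (a : ℕ) + 1 - ((r : ℝ) + 1) / 2

noncomputable def centeredPowerSum (r p : ℕ) : ℝ := ∑ a : Fin r, centeredRank r a ^ p

noncomputable def rankDiffMoment (r p q : ℕ) : ℝ :=
  ∑ a : Fin r, ∑ b : Fin r, centeredRank r a ^ p * (centeredRank r b - centeredRank r a) ^ q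

lemma centeredPowerSum_eq_sum_range (r p : ℕ) :
    centeredPowerSum r p = ∑ a ∈ range r, ((a : ℝ) - ((r : ℝ) - 1) / 2) ^ p := by
  rw [← Fin.sum_univ_eq_sum_range (fun a => ((a : ℝ) - ((r : ℝ) - 1) / 2) ^ p)]
  refine sum_congr rfl fun a _ => ?_
  rw [centeredRank]
  ring_nf

lemma centeredPowerSum_add_two (r p : ℕ) :
    centeredPowerSum (r + 2) p
      = centeredPowerSum r p + (-(((r : ℝ) + 1) / 2)) ^ p + (((r : ℝ) + 1) / 2) ^ p := by
  simp only [centeredPowerSum_eq_sum_range, sum_range_succ _ (r + 1),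
    sum_range_succ' _ r]
  have shift : ∀ a : ℕ, ((a + 1 : ℕ) : ℝ) - ((r + 2 : ℕ) - 1 : ℝ) / 2 = a - ((r : ℝ) - 1) / 2 :=
    fun a => by push_cast; ring
  simp only [shift]
  congr 2 <;> push_cast <;> ring

lemma centeredPowerSum_eq_of_recurrence {p : ℕ} (f : ℕ → ℝ) (h0 : f 0 = 0) (h1 : f 1 = 0 ^ p)
    (hstep : ∀ r : ℕ, f (r + 2) = f r + (-(((r : ℝ) + 1) / 2)) ^ p + (((r : ℝ) + 1) / 2) ^ p) :
    ∀ r, centeredPowerSum r p = f r := by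
  intro r
  induction r using Nat.twoStepInduction with
  | zero => simp [centeredPowerSum, h0]
  | one => simp [centeredPowerSum, centeredRank, h1]
  | more r ih _ => rw [centeredPowerSum_add_two, hstep, ih]

lemma centeredPowerSum_of_odd {p : ℕ} (hp : Odd p) (r : ℕ) : centeredPowerSum r p = 0 :=
  centeredPowerSum_eq_of_recurrence (fun _ => 0) rfl (by simp [hp.pos.ne'])
    (fun r => by simp [hp.neg_pow]) r

lemma centeredPowerSum_zero (r : ℕ) : centeredPowerSum r 0 = r := by
  simp [centeredPowerSum]

lemma centeredPowerSum_two : ∀ r : ℕ,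
    centeredPowerSum r 2 = ((r : ℝ) ^ 3 - r) / 12 :=
  centeredPowerSum_eq_of_recurrence _ (by norm_num) (by norm_num) fun r => by push_cast; ring

lemma centeredPowerSum_four : ∀ r : ℕ,
    centeredPowerSum r 4 = (3 * (r : ℝ) ^ 5 - 10 * r ^ 3 + 7 * r) / 240 :=
  centeredPowerSum_eq_of_recurrence _ (by norm_num) (by norm_num) fun r => by push_cast; ring

lemma centeredPowerSum_six : ∀ r : ℕ,
    centeredPowerSum r 6 = (3 * (r : ℝ) ^ 7 - 21 * r ^ 5 + 49 * r ^ 3 - 31 * r) / 1344 :=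
  centeredPowerSum_eq_of_recurrence _ (by norm_num) (by norm_num) fun r => by push_cast; ring

lemma centeredPowerSum_eight : ∀ r : ℕ,
    centeredPowerSum r 8
      = (5 * (r : ℝ) ^ 9 - 60 * r ^ 7 + 294 * r ^ 5 - 620 * r ^ 3 + 381 * r) / 11520 :=
  centeredPowerSum_eq_of_recurrence _ (by norm_num) (by norm_num) fun r => by push_cast; ring

lemma rankDiffMoment_eq_sum (r p q : ℕ) :
    rankDiffMoment r p q = ∑ j ∈ range (q + 1),
      (-1 : ℝ) ^ (q - j) * q.choose j * centeredPowerSum r j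
        * centeredPowerSum r (p + (q - j)) := by
  have expand : ∀ x y : ℝ, x ^ p * (y - x) ^ q
      = ∑ j ∈ range (q + 1), (-1 : ℝ) ^ (q - j) * q.choose j * y ^ j * x ^ (p + (q - j)) := by
    intro x y
    rw [sub_eq_add_neg, add_pow, mul_sum]
    refine sum_congr rfl fun j _ => ?_
    rw [neg_pow, pow_add]
    ring
  simp only [rankDiffMoment, expand, centeredPowerSum, mul_sum, sum_mul]
  exact (sum_congr rfl fun a _ => sum_comm).trans sum_comm

lemma rankDiffMoment_of_odd {p q : ℕ} (hpq : Odd (p + q)) (r : ℕ) :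
    rankDiffMoment r p q = 0 := by
  rw [rankDiffMoment_eq_sum]
  refine sum_eq_zero fun j hj => ?_
  have hjq : j ≤ q := Nat.lt_succ_iff.mp (mem_range.mp hj)
  rcases Nat.even_or_odd j with hj | hj
  · obtain ⟨a, rfl⟩ := hj
    obtain ⟨b, hb⟩ := hpq
    rw [centeredPowerSum_of_odd (p := p + (q - (a + a))) ⟨b - a, by omega⟩, mul_zero]
  · rw [centeredPowerSum_of_odd hj, mul_zero, zero_mul]

lemma rankDiffMoment_zero_four (r : ℕ) :
    rankDiffMoment r 0 4 = 2 * r * centeredPowerSum r 4 + 6 * centeredPowerSum r 2 ^ 2 := by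
  simp only [rankDiffMoment_eq_sum, sum_range_succ, sum_range_zero, Nat.choose,
    Nat.reduceAdd, Nat.reduceSub, centeredPowerSum_of_odd, Nat.odd_iff, centeredPowerSum_zero]
  ring

lemma rankDiffMoment_two_four (r : ℕ) :
    rankDiffMoment r 2 4
      = r * centeredPowerSum r 6 + 7 * centeredPowerSum r 2 * centeredPowerSum r 4 := by
  simp only [rankDiffMoment_eq_sum, sum_range_succ, sum_range_zero, Nat.choose,
    Nat.reduceAdd, Nat.reduceSub, centeredPowerSum_of_odd, Nat.odd_iff, centeredPowerSum_zero]
  ring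

lemma rankDiffMoment_four_four (r : ℕ) :
    rankDiffMoment r 4 4 = r * centeredPowerSum r 8
      + 6 * centeredPowerSum r 2 * centeredPowerSum r 6 + centeredPowerSum r 4 ^ 2 := by
  simp only [rankDiffMoment_eq_sum, sum_range_succ, sum_range_zero, Nat.choose,
    Nat.reduceAdd, Nat.reduceSub, centeredPowerSum_of_odd, Nat.odd_iff, centeredPowerSum_zero]
  ring

lemma rankDiffMoment_zero_six (r : ℕ) :
    rankDiffMoment r 0 6
      = 2 * r * centeredPowerSum r 6 + 30 * centeredPowerSum r 2 * centeredPowerSum r 4 := by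
  simp only [rankDiffMoment_eq_sum, sum_range_succ, sum_range_zero, Nat.choose,
    Nat.reduceAdd, Nat.reduceSub, centeredPowerSum_of_odd, Nat.odd_iff, centeredPowerSum_zero]
  ring

lemma rankDiffMoment_two_six (r : ℕ) :
    rankDiffMoment r 2 6 = r * centeredPowerSum r 8
      + 16 * centeredPowerSum r 2 * centeredPowerSum r 6 + 15 * centeredPowerSum r 4 ^ 2 := by
  simp only [rankDiffMoment_eq_sum, sum_range_succ, sum_range_zero, Nat.choose,
    Nat.reduceAdd, Nat.reduceSub, centeredPowerSum_of_odd, Nat.odd_iff, centeredPowerSum_zero]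
  ring

lemma centeredPowerSum_two_mul_rankDiffMoment_zero_four_le (r : ℕ) (hr : 2 ≤ r) :
    12 * centeredPowerSum r 2 * rankDiffMoment r 0 4 ≤ 0.1455 * (r : ℝ) ^ 8 * (r + 1) := by
  have hs : (0 : ℝ) ≤ r - 2 := by rw [sub_nonneg]; exact_mod_cast hr
  rw [rankDiffMoment_zero_four, centeredPowerSum_two, centeredPowerSum_four]
  nlinarith [hs, pow_nonneg hs 2, pow_nonneg hs 3, pow_nonneg hs 4, pow_nonneg hs 5,
    pow_nonneg hs 6, pow_nonneg hs 7, pow_nonneg hs 8, pow_nonneg hs 9]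

lemma rankDiffMoment_two_four_le (r : ℕ) (hr : 2 ≤ r) :
    12 * rankDiffMoment r 2 4 ≤ 0.1455 * (r : ℝ) ^ 7 * (r + 1) := by
  have hs : (0 : ℝ) ≤ r - 2 := by rw [sub_nonneg]; exact_mod_cast hr
  rw [rankDiffMoment_two_four, centeredPowerSum_two, centeredPowerSum_four, centeredPowerSum_six]
  nlinarith [hs, pow_nonneg hs 2, pow_nonneg hs 3, pow_nonneg hs 4, pow_nonneg hs 5,
    pow_nonneg hs 6, pow_nonneg hs 7, pow_nonneg hs 8]

lemma centeredPowerSum_two_mul_rankDiffMoment_zero_six_le (r : ℕ) (hr : 2 ≤ r) :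
    12 * centeredPowerSum r 2 * rankDiffMoment r 0 6 ≤ 0.09116 * (r : ℝ) ^ 10 * (r + 1) := by
  have hs : (0 : ℝ) ≤ r - 2 := by rw [sub_nonneg]; exact_mod_cast hr
  rw [rankDiffMoment_zero_six, centeredPowerSum_two, centeredPowerSum_four, centeredPowerSum_six]
  nlinarith [hs, pow_nonneg hs 2, pow_nonneg hs 3, pow_nonneg hs 4, pow_nonneg hs 5,
    pow_nonneg hs 6, pow_nonneg hs 7, pow_nonneg hs 8, pow_nonneg hs 9, pow_nonneg hs 10,
    pow_nonneg hs 11]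

lemma rankDiffMoment_two_six_le (r : ℕ) (hr : 2 ≤ r) :
    12 * rankDiffMoment r 2 6 ≤ 0.09116 * (r : ℝ) ^ 9 * (r + 1) := by
  have hs : (0 : ℝ) ≤ r - 2 := by rw [sub_nonneg]; exact_mod_cast hr
  rw [rankDiffMoment_two_six, centeredPowerSum_two, centeredPowerSum_four, centeredPowerSum_six,
    centeredPowerSum_eight]
  nlinarith [hs, pow_nonneg hs 2, pow_nonneg hs 3, pow_nonneg hs 4, pow_nonneg hs 5,
    pow_nonneg hs 6, pow_nonneg hs 7, pow_nonneg hs 8, pow_nonneg hs 9, pow_nonneg hs 10]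

lemma rankDiffMoment_quartic_combination_le (r : ℕ) (hr : 2 ≤ r) :
    144 * (rankDiffMoment r 4 4 * r ^ 2
        + (6 * centeredPowerSum r 2 * rankDiffMoment r 2 4
          + centeredPowerSum r 4 * rankDiffMoment r 0 4) * r / 4
        + 3 * centeredPowerSum r 2 ^ 2 * rankDiffMoment r 0 4)
      ≤ 0.6717 * (r : ℝ) ^ 10 * (r + 1) ^ 2 := by
  have hs : (0 : ℝ) ≤ r - 2 := by rw [sub_nonneg]; exact_mod_cast hr
  rw [rankDiffMoment_zero_four, rankDiffMoment_two_four, rankDiffMoment_four_four,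
    centeredPowerSum_two, centeredPowerSum_four, centeredPowerSum_six, centeredPowerSum_eight]
  nlinarith [hs, pow_nonneg hs 2, pow_nonneg hs 3, pow_nonneg hs 4, pow_nonneg hs 5,
    pow_nonneg hs 6, pow_nonneg hs 7, pow_nonneg hs 8, pow_nonneg hs 9, pow_nonneg hs 10,
    pow_nonneg hs 11, pow_nonneg hs 12]

lemma centeredPowerSum_nonneg {p : ℕ} (hp : Even p) (r : ℕ) : 0 ≤ centeredPowerSum r p :=
  sum_nonneg fun _ _ => hp.pow_nonneg _

lemma rankDiffMoment_nonneg {p q : ℕ} (hp : Even p) (hq : Even q) (r : ℕ) :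
    0 ≤ rankDiffMoment r p q :=
  sum_nonneg fun _ _ => sum_nonneg fun _ _ =>
    mul_nonneg (hp.pow_nonneg _) (hq.pow_nonneg _)

section Averaging

variable {ι G : Type*} [DecidableEq ι] [Group G]

lemma bijective_update_mul_apply (j : ι) (σ : G) :
    Function.Bijective fun ω : ι → G => Function.update ω j (σ * ω j) := by
  refine Function.bijective_iff_has_inverse.2
    ⟨fun ω => Function.update ω j (σ⁻¹ * ω j), fun ω => ?_, fun ω => ?_⟩ <;>
  · funext i
    by_cases hi : i = j
    · subst hi; simp
    · simp [Function.update_of_ne hi]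

variable [Fintype ι] [Fintype G]

lemma expect_mul_apply_of_update_invariant (j : ι) {F : (ι → G) → ℝ}
    (hF : ∀ ω g, F (Function.update ω j g) = F ω) (h : G → ℝ) :
    𝔼 ω, F ω * h (ω j) = (𝔼 ω, F ω) * 𝔼 g, h g := by
  -- Translating the `j`-th coordinate by `σ` preserves the uniform measure and `F`, so averaging
  -- over `σ` replaces `h (ω j)` by its mean.
  have translate : ∀ σ : G, 𝔼 ω, F ω * h (ω j) = 𝔼 ω, F ω * h (σ * ω j) := fun σ =>
    (Fintype.expect_bijective _ (bijective_update_mul_apply j σ) _ _ fun ω => by simp [hF]).symm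
  calc 𝔼 ω, F ω * h (ω j) = 𝔼 σ : G, 𝔼 ω, F ω * h (σ * ω j) := by
        simp only [← translate, Fintype.expect_const]
    _ = 𝔼 ω, F ω * 𝔼 σ : G, h (σ * ω j) := by
        rw [expect_comm]
        simp only [mul_expect]
    _ = 𝔼 ω, F ω * 𝔼 g, h g := by
        simp only [Fintype.expect_bijective _ (Group.mulRight_bijective _) (fun σ => h (σ * _)) h
          fun _ => rfl]
    _ = (𝔼 ω, F ω) * 𝔼 g, h g := (expect_mul _ _ _).symm

lemma expect_comp_eval (j : ι) (h : G → ℝ) : 𝔼 ω : ι → G, h (ω j) = 𝔼 g, h g := by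
  simpa using expect_mul_apply_of_update_invariant j (F := fun _ => 1) (fun _ _ => rfl) h

lemma expect_add_pow_mul_of_update_invariant (j : ι) {F : (ι → G) → ℝ}
    (hF : ∀ ω g, F (Function.update ω j g) = F ω) (Y h : G → ℝ) (p : ℕ) :
    𝔼 ω, (F ω + Y (ω j)) ^ p * h (ω j)
      = ∑ i ∈ range (p + 1), p.choose i * (𝔼 ω, F ω ^ i) * 𝔼 g, Y g ^ (p - i) * h g := by
  simp only [add_pow, sum_mul, expect_sum_comm]
  refine sum_congr rfl fun i _ => ?_
  have hFi : ∀ ω g, F (Function.update ω j g) ^ i = F ω ^ i := fun ω g => by rw [hF]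
  calc 𝔼 ω, F ω ^ i * Y (ω j) ^ (p - i) * p.choose i * h (ω j)
      = 𝔼 ω, F ω ^ i * (p.choose i * (Y (ω j) ^ (p - i) * h (ω j))) :=
        expect_congr rfl fun ω _ => by ring
    _ = _ := by
        rw [expect_mul_apply_of_update_invariant j (F := fun ω => F ω ^ i) hFi
          (fun g => p.choose i * (Y g ^ (p - i) * h g)), ← mul_expect]
        ring

end Averaging

section CoordinateSums

variable {ι G : Type*} [DecidableEq ι]

lemma sum_comp_update_of_notMem {s : Finset ι} {j : ι} (hj : j ∉ s) (X : G → ℝ) (ω : ι → G)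
    (g : G) : ∑ i ∈ s, X (Function.update ω j g i) = ∑ i ∈ s, X (ω i) :=
  sum_congr rfl fun i hi => by rw [Function.update_of_ne (ne_of_mem_of_not_mem hi hj)]

variable [Group G] [Fintype ι] [Fintype G] {X : G → ℝ}

lemma expect_sum_insert_apply_pow {s : Finset ι} {j : ι} (hj : j ∉ s) (p : ℕ) :
    𝔼 ω : ι → G, (∑ i ∈ insert j s, X (ω i)) ^ p
      = ∑ a ∈ range (p + 1),
          p.choose a * (𝔼 ω : ι → G, (∑ i ∈ s, X (ω i)) ^ a) * 𝔼 g, X g ^ (p - a) := by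
  simpa only [sum_insert hj, add_comm, mul_one] using
    expect_add_pow_mul_of_update_invariant j (sum_comp_update_of_notMem hj X) X (fun _ => 1) p

variable (hX : 𝔼 g, X g = 0)
include hX

lemma expect_sum_apply_eq_zero (s : Finset ι) : 𝔼 ω : ι → G, ∑ i ∈ s, X (ω i) = 0 := by
  rw [expect_sum_comm]
  exact sum_eq_zero fun i _ => by rw [expect_comp_eval, hX]

lemma expect_sum_apply_sq (s : Finset ι) :
    𝔼 ω : ι → G, (∑ i ∈ s, X (ω i)) ^ 2 = #s * 𝔼 g, X g ^ 2 := by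
  induction s using Finset.induction_on with
  | empty => simp
  | insert j s hj ih =>
    rw [expect_sum_insert_apply_pow hj, card_insert_of_notMem hj]
    simp only [sum_range_succ, sum_range_zero, Nat.choose, pow_zero, pow_one, Nat.reduceSub,
      tsub_self, univ_nonempty, expect_const, ih, expect_sum_apply_eq_zero hX]
    push_cast
    ring

lemma expect_sum_apply_pow_four (s : Finset ι) :
    𝔼 ω : ι → G, (∑ i ∈ s, X (ω i)) ^ 4
      = #s * 𝔼 g, X g ^ 4 + 3 * #s * (#s - 1) * (𝔼 g, X g ^ 2) ^ 2 := by
  induction s using Finset.induction_on with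
  | empty => simp
  | insert j s hj ih =>
    rw [expect_sum_insert_apply_pow hj, card_insert_of_notMem hj]
    simp only [sum_range_succ, sum_range_zero, Nat.choose, pow_zero, pow_one, Nat.reduceSub,
      tsub_self, univ_nonempty, expect_const, ih, hX, expect_sum_apply_eq_zero hX,
      expect_sum_apply_sq hX]
    push_cast
    ring

end CoordinateSums

section RandomPermutation

open Equiv

variable {α : Type*} [Fintype α] [DecidableEq α]

lemma expect_perm_apply (k : α) (f : α → ℝ) : 𝔼 σ : Perm α, f (σ k) = 𝔼 a, f a := by
  have move : ∀ x, 𝔼 σ : Perm α, f (σ x) = 𝔼 σ : Perm α, f (σ k) := fun x =>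
    Fintype.expect_bijective (fun σ => σ * swap k x) (Group.mulRight_bijective _) _ _
      fun σ => by simp
  have : Nonempty α := ⟨k⟩
  calc 𝔼 σ : Perm α, f (σ k) = 𝔼 x, 𝔼 σ : Perm α, f (σ x) := by
        simp only [move, Fintype.expect_const]
    _ = 𝔼 σ : Perm α, 𝔼 x, f (σ x) := expect_comm ..
    _ = 𝔼 σ : Perm α, 𝔼 a, f a := by
        simp only [fun σ : Perm α => Fintype.expect_equiv σ (fun x => f (σ x)) f fun _ => rfl]
    _ = 𝔼 a, f a := Fintype.expect_const _

lemma sum_expect_perm_apply_apply (k : α) (g : α → α → ℝ) :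
    ∑ l, 𝔼 σ : Perm α, g (σ k) (σ l) = 𝔼 a, ∑ b, g a b := by
  rw [← expect_sum_comm]
  simp only [fun σ : Perm α => Fintype.sum_equiv σ (fun l => g (σ k) (σ l)) (g (σ k)) fun _ => rfl]
  exact expect_perm_apply k fun a => ∑ b, g a b

end RandomPermutation

section Friedman

variable {n r : ℕ}

lemma integral_friedmanMeasure (f : (Fin n → Equiv.Perm (Fin r)) → ℝ) :
    ∫ ω, f ω ∂friedmanMeasure n r = 𝔼 ω, f ω := by
  rw [friedmanMeasure, PMF.integral_eq_sum, Fintype.expect_eq_sum_div_card, sum_div]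
  simp [div_eq_inv_mul]

lemma rho_eq_centeredRank (i : Fin n) (j : Fin r) (ω : Fin n → Equiv.Perm (Fin r)) :
    rho n r i j ω = centeredRank r (ω i j) := rfl

lemma Sstat_scale_sq (n r : ℕ) :
    (√12 / √((r : ℝ) * (r + 1) * n)) ^ 2 = 12 / ((r : ℝ) * (r + 1) * n) := by
  rw [div_pow, Real.sq_sqrt (by norm_num), Real.sq_sqrt (by positivity)]

lemma expect_centeredRank_pow (k : Fin r) (p : ℕ) :
    𝔼 σ : Equiv.Perm (Fin r), centeredRank r (σ k) ^ p = centeredPowerSum r p / r := by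
  rw [expect_perm_apply k (centeredRank r · ^ p), Fintype.expect_eq_sum_div_card,
    Fintype.card_fin]
  rfl

lemma sum_expect_centeredRank_pow_mul_sub_pow (k : Fin r) (p q : ℕ) :
    ∑ l, 𝔼 σ : Equiv.Perm (Fin r),
        centeredRank r (σ k) ^ p * (centeredRank r (σ l) - centeredRank r (σ k)) ^ q
      = rankDiffMoment r p q / r := by
  rw [sum_expect_perm_apply_apply k
      (fun a b => centeredRank r a ^ p * (centeredRank r b - centeredRank r a) ^ q),
    Fintype.expect_eq_sum_div_card, Fintype.card_fin]
  rfl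

noncomputable def rankSumExcept (m : Fin n) (k : Fin r) (ω : Fin n → Equiv.Perm (Fin r)) : ℝ :=
  ∑ j ∈ univ.erase m, centeredRank r (ω j k)

lemma rankSumExcept_update (m : Fin n) (k : Fin r) (ω : Fin n → Equiv.Perm (Fin r))
    (σ : Equiv.Perm (Fin r)) : rankSumExcept m k (Function.update ω m σ) = rankSumExcept m k ω :=
  sum_comp_update_of_notMem (notMem_erase m univ)
    (fun σ : Equiv.Perm (Fin r) => centeredRank r (σ k)) ω σ

lemma Sstat_eq_mul_add (m : Fin n) (k : Fin r) (ω : Fin n → Equiv.Perm (Fin r)) :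
    Sstat n r k ω
      = √12 / √((r : ℝ) * (r + 1) * n) * (rankSumExcept m k ω + centeredRank r (ω m k)) := by
  rw [Sstat, rankSumExcept, sum_erase_add _ _ (mem_univ m)]
  rfl

lemma sum_integral_Sstat_pow_mul_rho_sub_pow (m : Fin n) (k : Fin r) (p q : ℕ) :
    ∑ l, ∫ ω, Sstat n r k ω ^ p * (rho n r m l ω - rho n r m k ω) ^ q ∂friedmanMeasure n r
      = (√12 / √((r : ℝ) * (r + 1) * n)) ^ p * ∑ i ∈ range (p + 1),
          p.choose i * (𝔼 ω, rankSumExcept m k ω ^ i) * (rankDiffMoment r (p - i) q / r) := by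
  have split : ∀ l, 𝔼 ω, (rankSumExcept m k ω + centeredRank r (ω m k)) ^ p
        * (centeredRank r (ω m l) - centeredRank r (ω m k)) ^ q
      = ∑ i ∈ range (p + 1), p.choose i * (𝔼 ω, rankSumExcept m k ω ^ i)
          * 𝔼 σ : Equiv.Perm (Fin r), centeredRank r (σ k) ^ (p - i)
            * (centeredRank r (σ l) - centeredRank r (σ k)) ^ q :=
    fun l => expect_add_pow_mul_of_update_invariant m (rankSumExcept_update m k)
      (fun σ : Equiv.Perm (Fin r) => centeredRank r (σ k))
      (fun σ : Equiv.Perm (Fin r) => (centeredRank r (σ l) - centeredRank r (σ k)) ^ q) p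
  simp only [integral_friedmanMeasure, Sstat_eq_mul_add m k, rho_eq_centeredRank, mul_pow,
    mul_assoc (_ ^ p), ← mul_expect, ← mul_sum, split]
  rw [sum_comm]
  simp only [← mul_sum, sum_expect_centeredRank_pow_mul_sub_pow k]

lemma expect_centeredRank_eq_zero (k : Fin r) :
    𝔼 σ : Equiv.Perm (Fin r), centeredRank r (σ k) = 0 := by
  simpa [centeredPowerSum_of_odd odd_one] using expect_centeredRank_pow k 1

lemma expect_rankSumExcept_eq_zero (m : Fin n) (k : Fin r) : 𝔼 ω, rankSumExcept m k ω = 0 :=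
  expect_sum_apply_eq_zero (expect_centeredRank_eq_zero k) _

lemma card_erase_univ_fin (m : Fin n) : ((univ.erase m).card : ℝ) = n - 1 := by
  rw [card_erase_of_mem (mem_univ m), card_univ, Fintype.card_fin, Nat.cast_pred m.pos]

lemma expect_rankSumExcept_sq (m : Fin n) (k : Fin r) :
    𝔼 ω, rankSumExcept m k ω ^ 2 = (n - 1) * (centeredPowerSum r 2 / r) := by
  rw [← card_erase_univ_fin m, ← expect_centeredRank_pow k]
  exact expect_sum_apply_sq (expect_centeredRank_eq_zero k) _

lemma expect_rankSumExcept_pow_four (m : Fin n) (k : Fin r) :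
    𝔼 ω, rankSumExcept m k ω ^ 4
      = (n - 1) * (centeredPowerSum r 4 / r)
        + 3 * (n - 1) * (n - 2) * (centeredPowerSum r 2 / r) ^ 2 := by
  rw [show (n : ℝ) - 2 = n - 1 - 1 by ring, ← card_erase_univ_fin m, ← expect_centeredRank_pow k,
    ← expect_centeredRank_pow k]
  exact expect_sum_apply_pow_four (expect_centeredRank_eq_zero k) _

lemma sum_integral_Sstat_sq_mul_rho_sub_pow (m : Fin n) (k : Fin r) (q : ℕ) :
    ∑ l, ∫ ω, Sstat n r k ω ^ 2 * (rho n r m l ω - rho n r m k ω) ^ q ∂friedmanMeasure n r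
      = 12 / ((r : ℝ) * (r + 1) * n) * (rankDiffMoment r 2 q / r
          + (n - 1) * (centeredPowerSum r 2 / r) * (rankDiffMoment r 0 q / r)) := by
  rw [sum_integral_Sstat_pow_mul_rho_sub_pow, Sstat_scale_sq]
  simp only [sum_range_succ, sum_range_zero, Nat.choose, pow_zero, pow_one, univ_nonempty,
    expect_const, expect_rankSumExcept_eq_zero, expect_rankSumExcept_sq]
  ring

lemma sum_integral_Sstat_pow_four_mul_rho_sub_pow_four (m : Fin n) (k : Fin r) :
    ∑ l, ∫ ω, Sstat n r k ω ^ 4 * (rho n r m l ω - rho n r m k ω) ^ 4 ∂friedmanMeasure n r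
      = (12 / ((r : ℝ) * (r + 1) * n)) ^ 2 * (rankDiffMoment r 4 4 / r
          + 6 * (n - 1) * (centeredPowerSum r 2 / r) * (rankDiffMoment r 2 4 / r)
          + ((n - 1) * (centeredPowerSum r 4 / r)
              + 3 * (n - 1) * (n - 2) * (centeredPowerSum r 2 / r) ^ 2)
            * (rankDiffMoment r 0 4 / r)) := by
  rw [sum_integral_Sstat_pow_mul_rho_sub_pow, ← Sstat_scale_sq, ← pow_mul]
  simp only [sum_range_succ, sum_range_zero, Nat.choose, pow_zero, pow_one, univ_nonempty,
    expect_const, expect_rankSumExcept_eq_zero, expect_rankSumExcept_sq,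
    expect_rankSumExcept_pow_four, rankDiffMoment_of_odd (p := 1) (q := 4) ⟨2, rfl⟩]
  ring

lemma sum_integral_Sstat_sq_mul_rho_sub_pow_le (m : Fin n) (k : Fin r) (q e : ℕ) {C : ℝ}
    (hA : 12 * rankDiffMoment r 2 q ≤ C * r ^ (e + 2) * (r + 1))
    (hB : 12 * centeredPowerSum r 2 * rankDiffMoment r 0 q ≤ C * r ^ (e + 3) * (r + 1)) :
    ∑ l, ∫ ω, Sstat n r k ω ^ 2 * (rho n r m l ω - rho n r m k ω) ^ q ∂friedmanMeasure n r
      ≤ C * r ^ e := by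
  have hr : (0 : ℝ) < r := Nat.cast_pos.2 k.pos
  have hn : (1 : ℝ) ≤ n := Nat.one_le_cast.2 m.pos
  rw [sum_integral_Sstat_sq_mul_rho_sub_pow, div_mul_eq_mul_div, div_le_iff₀ (by positivity)]
  calc 12 * (rankDiffMoment r 2 q / r
          + (n - 1) * (centeredPowerSum r 2 / r) * (rankDiffMoment r 0 q / r))
      = (12 * rankDiffMoment r 2 q * r
          + (n - 1) * (12 * centeredPowerSum r 2 * rankDiffMoment r 0 q)) / r ^ 2 := by
        field_simp
    _ ≤ (C * r ^ (e + 2) * (r + 1) * r + (n - 1) * (C * r ^ (e + 3) * (r + 1))) / r ^ 2 := by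
        gcongr
    _ = C * r ^ e * (r * (r + 1) * n) := by
        field_simp
        ring

lemma add_sub_one_mul_add_sub_one_mul_sub_two_mul_le {a b c x : ℝ} (ha : 0 ≤ a) (hb : 0 ≤ b)
    (hc : 0 ≤ c) (hx : 1 ≤ x) :
    a + (x - 1) * b + (x - 1) * (x - 2) * c ≤ x ^ 2 * (a + b / 4 + c) := by
  nlinarith [mul_nonneg ha (by nlinarith : (0 : ℝ) ≤ x ^ 2 - 1),
    mul_nonneg hb (sq_nonneg (x / 2 - 1)), mul_nonneg hc (by linarith : (0 : ℝ) ≤ 3 * x - 2)]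

lemma sum_integral_Sstat_pow_four_mul_rho_sub_pow_four_le (hr : 2 ≤ r) (m : Fin n) (k : Fin r) :
    ∑ l, ∫ ω, Sstat n r k ω ^ 4 * (rho n r m l ω - rho n r m k ω) ^ 4 ∂friedmanMeasure n r
      ≤ 0.6717 * (r : ℝ) ^ 5 := by
  have hr0 : (0 : ℝ) < r := Nat.cast_pos.2 k.pos
  have hn : (1 : ℝ) ≤ n := Nat.one_le_cast.2 m.pos
  have hP2 := centeredPowerSum_nonneg even_two r
  have hP4 := centeredPowerSum_nonneg (p := 4) ⟨2, rfl⟩ r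
  have hM04 := rankDiffMoment_nonneg (p := 0) ⟨0, rfl⟩ ⟨2, rfl⟩ r
  have hM24 := rankDiffMoment_nonneg even_two ⟨2, rfl⟩ r
  have hM44 := rankDiffMoment_nonneg (p := 4) ⟨2, rfl⟩ ⟨2, rfl⟩ r
  have weights := add_sub_one_mul_add_sub_one_mul_sub_two_mul_le
    (by positivity : 0 ≤ rankDiffMoment r 4 4 * r ^ 2)
    (by positivity : 0 ≤ (6 * centeredPowerSum r 2 * rankDiffMoment r 2 4
      + centeredPowerSum r 4 * rankDiffMoment r 0 4) * r)
    (by positivity : 0 ≤ 3 * centeredPowerSum r 2 ^ 2 * rankDiffMoment r 0 4) hn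
  rw [sum_integral_Sstat_pow_four_mul_rho_sub_pow_four, div_pow, div_mul_eq_mul_div,
    div_le_iff₀ (by positivity)]
  calc 12 ^ 2 * (rankDiffMoment r 4 4 / r
          + 6 * (n - 1) * (centeredPowerSum r 2 / r) * (rankDiffMoment r 2 4 / r)
          + ((n - 1) * (centeredPowerSum r 4 / r)
              + 3 * (n - 1) * (n - 2) * (centeredPowerSum r 2 / r) ^ 2)
            * (rankDiffMoment r 0 4 / r))
      = 144 * (rankDiffMoment r 4 4 * r ^ 2
          + (n - 1) * ((6 * centeredPowerSum r 2 * rankDiffMoment r 2 4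
            + centeredPowerSum r 4 * rankDiffMoment r 0 4) * r)
          + (n - 1) * (n - 2) * (3 * centeredPowerSum r 2 ^ 2 * rankDiffMoment r 0 4))
          / r ^ 3 := by
        field_simp
        ring
    _ ≤ n ^ 2 * (144 * (rankDiffMoment r 4 4 * r ^ 2
          + (6 * centeredPowerSum r 2 * rankDiffMoment r 2 4
            + centeredPowerSum r 4 * rankDiffMoment r 0 4) * r / 4
          + 3 * centeredPowerSum r 2 ^ 2 * rankDiffMoment r 0 4)) / r ^ 3 := by
        gcongr ?_ / _
        linarith
    _ ≤ n ^ 2 * (0.6717 * (r : ℝ) ^ 10 * (r + 1) ^ 2) / r ^ 3 := by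
        gcongr n ^ 2 * ?_ / _
        exact rankDiffMoment_quartic_combination_le r hr
    _ = 0.6717 * r ^ 5 * ((r * (r + 1) * n) ^ 2) := by
        field_simp

end Friedman

theorem Sstat_rho_difference_bounds_general (n r : ℕ) (hr : 2 ≤ r)
    (m : Fin n) (k : Fin r) :
    (∑ l, ∫ ω, (Sstat n r k ω) ^ 2 * (rho n r m l ω - rho n r m k ω) ^ 4
        ∂(friedmanMeasure n r) ≤ 0.1455 * (r : ℝ) ^ 5) ∧
    (∑ l, ∫ ω, (Sstat n r k ω) ^ 4 * (rho n r m l ω - rho n r m k ω) ^ 4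
        ∂(friedmanMeasure n r) ≤ 0.6717 * (r : ℝ) ^ 5) ∧
    ∑ l, ∫ ω, (Sstat n r k ω) ^ 2 * (rho n r m l ω - rho n r m k ω) ^ 6
        ∂(friedmanMeasure n r) ≤ 0.09116 * (r : ℝ) ^ 7 :=
  ⟨sum_integral_Sstat_sq_mul_rho_sub_pow_le m k 4 5 (rankDiffMoment_two_four_le r hr)
      (centeredPowerSum_two_mul_rankDiffMoment_zero_four_le r hr),
    sum_integral_Sstat_pow_four_mul_rho_sub_pow_four_le hr m k,
    sum_integral_Sstat_sq_mul_rho_sub_pow_le m k 6 7 (rankDiffMoment_two_six_le r hr)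
      (centeredPowerSum_two_mul_rankDiffMoment_zero_six_le r hr)⟩

/-- **Lemma 3.6 (Gaunt–Reinert).** For `r ≥ 2`, `n ≥ 1`, `m ∈ {1, …, n}` and
`k ∈ {1, …, r}`: `∑_{l=1}^r E[S_k²(ρ_m(l) − ρ_m(k))⁴] ≤ 0.1455 r⁵`,
`∑_{l=1}^r E[S_k⁴(ρ_m(l) − ρ_m(k))⁴] ≤ 0.6717 r⁵` and
`∑_{l=1}^r E[S_k²(ρ_m(l) − ρ_m(k))⁶] ≤ 0.09116 r⁷`. -/
theorem Sstat_rho_difference_bounds (n r : ℕ) (hr : 2 ≤ r) (hn : 1 ≤ n)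
    (m : Fin n) (k : Fin r) :
    (∑ l, ∫ ω, (Sstat n r k ω) ^ 2 * (rho n r m l ω - rho n r m k ω) ^ 4
        ∂(friedmanMeasure n r) ≤ 0.1455 * (r : ℝ) ^ 5) ∧
    (∑ l, ∫ ω, (Sstat n r k ω) ^ 4 * (rho n r m l ω - rho n r m k ω) ^ 4
        ∂(friedmanMeasure n r) ≤ 0.6717 * (r : ℝ) ^ 5) ∧
    ∑ l, ∫ ω, (Sstat n r k ω) ^ 2 * (rho n r m l ω - rho n r m k ω) ^ 6
        ∂(friedmanMeasure n r) ≤ 0.09116 * (r : ℝ) ^ 7 :=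
  Sstat_rho_difference_bounds_general n r hr m k
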